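/- arXiv:2312.11408 — 2 statements merged into one kernel-verified Lean document; each statement's English description precedes it below -/
import Mathlib

section
/- Let E = (C,V,A,w,k) be a weighted ABC election, let c_1,…,c_k be the k candidates selected by AV labeled in order of selection (non-increasing approval weight), let ℓ ∈ {1,…,k}, and let x = w(V_{c_{k−ℓ+1}}) be the approval weight of candidate c_{k−ℓ+1}. An ℓ-replacement (C',V',A',w') is successful for AV (ties broken in favor of the candidates in C') if and only if every c' ∈ C' has approval weight among the new voters at least x, i.e., Σ_{v'∈V' : c'∈A'_{v'}} w'(v') ≥ x. -/
open Finset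

variable {Cand Voter : Type} [DecidableEq Cand] [DecidableEq Voter]

/-- The approval weight of candidate `c`: the total weight of the voters in `V` approving `c`. -/
def apprWeight (V : Finset Voter) (A : Voter → Finset Cand) (w : Voter → ℝ) (c : Cand) : ℝ :=
  ∑ v ∈ V.filter fun v => c ∈ A v, w v

/-- `W` is a committee that Approval Voting may select in the election `(C,V,A,w,k)`:
it consists of `k` candidates with highest approval weight. -/
def IsAVCommittee (C : Finset Cand) (V : Finset Voter) (A : Voter → Finset Cand)
    (w : Voter → ℝ) (k : ℕ) (W : Finset Cand) : Prop :=
  W ⊆ C ∧ W.card = k ∧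
    ∀ c ∈ W, ∀ c' ∈ C \ W, apprWeight V A w c' ≤ apprWeight V A w c

/-- The `ℓ`-replacement `(C',V',A',w')` is successful for AV on `(C,V,A,w,k)`:
with ties broken in favor of the candidates in `C'`, AV run on the extended election
selects all candidates of `C'`, i.e. some AV committee of the extended election contains `C'`. -/
def AVSuccessful (C : Finset Cand) (V : Finset Voter) (A : Voter → Finset Cand)
    (w : Voter → ℝ) (k : ℕ) (C' : Finset Cand) (V' : Finset Voter)
    (A' : Voter → Finset Cand) (w' : Voter → ℝ) : Prop :=
  ∃ W : Finset Cand,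
    IsAVCommittee (C ∪ C') (V ∪ V') (fun v => if v ∈ V then A v else A' v)
      (fun v => if v ∈ V then w v else w' v) k W ∧ C' ⊆ W

/-- Let `c 0, …, c (k-1)` be the `k` candidates selected by AV, labeled in order of selection
(non-increasing approval weight), let `1 ≤ ℓ ≤ k`, and let `x` be the approval weight of the
`(k-ℓ+1)`-th selected candidate (index `k-ℓ` in 0-based numbering). An `ℓ`-replacement
`(C',V',A',w')` is successful for AV if and only if every `c' ∈ C'` has approval weight among
the new voters at least `x`. -/
theorem av_replacement_successful_iff
    (C : Finset Cand) (V : Finset Voter) (A : Voter → Finset Cand) (w : Voter → ℝ) (k : ℕ)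
    (hA : ∀ v ∈ V, A v ⊆ C) (hw : ∀ v ∈ V, 0 ≤ w v) (hk : k ≤ C.card)
    (c : Fin k → Cand) (hcinj : Function.Injective c) (hcmem : ∀ i, c i ∈ C)
    (hcmono : ∀ i j : Fin k, i ≤ j → apprWeight V A w (c j) ≤ apprWeight V A w (c i))
    (hcAV : IsAVCommittee C V A w k (Finset.univ.image c))
    (ℓ : ℕ) (hℓ1 : 1 ≤ ℓ) (hℓk : ℓ ≤ k)
    (x : ℝ) (hx : x = apprWeight V A w (c ⟨k - ℓ, by omega⟩))
    (C' : Finset Cand) (V' : Finset Voter) (A' : Voter → Finset Cand) (w' : Voter → ℝ)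
    (hC'card : C'.card = ℓ) (hCC' : Disjoint C C') (hVV' : Disjoint V V')
    (hA' : ∀ v ∈ V', A' v ⊆ C') (hw' : ∀ v ∈ V', 0 ≤ w' v) :
    AVSuccessful C V A w k C' V' A' w' ↔
      ∀ c' ∈ C', x ≤ apprWeight V' A' w' c' := by
  classical
  have hℓk' : k - ℓ < k := by omega
  set Ae : Voter → Finset Cand := fun v => if v ∈ V then A v else A' v with hAe
  set we : Voter → ℝ := fun v => if v ∈ V then w v else w' v with hwe
  -- extended weights of old candidates
  have hold : ∀ d, d ∉ C' → apprWeight (V ∪ V') Ae we d = apprWeight V A w d := by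
    intro d hd
    unfold apprWeight
    rw [Finset.filter_union, Finset.sum_union (Finset.disjoint_filter_filter hVV')]
    have h2 : (V'.filter fun v => d ∈ Ae v) = ∅ := by
      rw [Finset.filter_eq_empty_iff]
      intro v hv
      have hvV : v ∉ V := Finset.disjoint_right.mp hVV' hv
      simp only [hAe, if_neg hvV]
      exact fun hmem => hd (hA' v hv hmem)
    have hfe : (V.filter fun v => d ∈ Ae v) = V.filter fun v => d ∈ A v :=
      Finset.filter_congr (fun v hv => by simp [hAe, hv])
    rw [h2, Finset.sum_empty, add_zero, hfe]
    exact Finset.sum_congr rfl (fun v hv => by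
      simp [hwe, (Finset.mem_filter.mp hv).1])
  -- extended weights of new candidates
  have hnew : ∀ d ∈ C', apprWeight (V ∪ V') Ae we d = apprWeight V' A' w' d := by
    intro d hd
    have hdC : d ∉ C := Finset.disjoint_right.mp hCC' hd
    unfold apprWeight
    rw [Finset.filter_union, Finset.sum_union (Finset.disjoint_filter_filter hVV')]
    have h1 : (V.filter fun v => d ∈ Ae v) = ∅ := by
      rw [Finset.filter_eq_empty_iff]
      intro v hv
      simp only [hAe, if_pos hv]
      exact fun hmem => hdC (hA v hv hmem)
    have hfe : (V'.filter fun v => d ∈ Ae v) = V'.filter fun v => d ∈ A' v :=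
      Finset.filter_congr (fun v hv => by
        have hvV : v ∉ V := Finset.disjoint_right.mp hVV' hv
        simp [hAe, hvV])
    rw [h1, Finset.sum_empty, zero_add, hfe]
    exact Finset.sum_congr rfl (fun v hv => by
      have hvV : v ∉ V := Finset.disjoint_right.mp hVV' (Finset.mem_filter.mp hv).1
      simp [hwe, hvV])
  constructor
  · rintro ⟨W, ⟨hWsub, hWcard, hWmax⟩, hC'W⟩ c' hc'
    -- card of W ∩ C
    have hWC : W ∩ C ∪ C' = W := by
      apply Finset.Subset.antisymm
      · exact Finset.union_subset (Finset.inter_subset_left) hC'W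
      · intro a ha
        rcases Finset.mem_union.mp (hWsub ha) with h | h
        · exact Finset.mem_union_left _ (Finset.mem_inter.mpr ⟨ha, h⟩)
        · exact Finset.mem_union_right _ h
    have hdisj : Disjoint (W ∩ C) C' :=
      (hCC'.mono_left Finset.inter_subset_right)
    have hWCcard : (W ∩ C).card = k - ℓ := by
      have := Finset.card_union_of_disjoint hdisj
      rw [hWC, hWcard, hC'card] at this
      omega
    -- pigeonhole: some c j with j ≤ k - ℓ is not in W
    set T : Finset Cand := (Finset.range (k - ℓ + 1)).image
      (fun j => c ⟨min j (k-1), by omega⟩) with hT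
    have hTcard : T.card = k - ℓ + 1 := by
      rw [hT, Finset.card_image_of_injOn, Finset.card_range]
      intro a ha b hb hab
      simp only [Finset.coe_range, Set.mem_Iio] at ha hb
      have h2 : min a (k-1) = min b (k-1) := congrArg Fin.val (hcinj hab)
      omega
    have hex : ∃ a ∈ T, a ∉ W := by
      by_contra hcon
      push_neg at hcon
      have hsub : T ⊆ W ∩ C := by
        intro a ha
        rcases Finset.mem_image.mp ha with ⟨j, hj, rfl⟩
        exact Finset.mem_inter.mpr ⟨hcon _ ha, hcmem _⟩
      have := Finset.card_le_card hsub
      rw [hTcard, hWCcard] at this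
      omega
    obtain ⟨a, haT, haW⟩ := hex
    rcases Finset.mem_image.mp haT with ⟨j, hj, rfl⟩
    simp only [Finset.mem_range] at hj
    have hjle : min j (k-1) ≤ k - ℓ := by omega
    have hle := hWmax c' (hC'W hc') _
      (Finset.mem_sdiff.mpr ⟨Finset.mem_union_left _ (hcmem _), haW⟩)
    rw [hnew c' hc', hold _ (Finset.disjoint_left.mp hCC' (hcmem _))] at hle
    calc x = apprWeight V A w (c ⟨k - ℓ, by omega⟩) := hx
      _ ≤ apprWeight V A w (c ⟨min j (k-1), by omega⟩) :=
          hcmono _ _ (by simp [Fin.le_def, hjle])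
      _ ≤ apprWeight V' A' w' c' := hle
  · intro h
    set T : Finset Cand := (Finset.range (k - ℓ)).image
      (fun j => c ⟨min j (k-1), by omega⟩) with hT
    have hTsub : T ⊆ C := by
      intro a ha
      rcases Finset.mem_image.mp ha with ⟨j, hj, rfl⟩
      exact hcmem _
    have hTcard : T.card = k - ℓ := by
      rw [hT, Finset.card_image_of_injOn, Finset.card_range]
      intro a ha b hb hab
      simp only [Finset.coe_range, Set.mem_Iio] at ha hb
      have h2 : min a (k-1) = min b (k-1) := congrArg Fin.val (hcinj hab)
      omega
    have hdisj : Disjoint C' T := (hCC'.symm.mono_right hTsub)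
    refine ⟨C' ∪ T, ⟨?_, ?_, ?_⟩, Finset.subset_union_left⟩
    · exact Finset.union_subset (Finset.subset_union_right)
        (hTsub.trans Finset.subset_union_left)
    · rw [Finset.card_union_of_disjoint hdisj, hTcard, hC'card]; omega
    · intro d hd e he
      rcases Finset.mem_sdiff.mp he with ⟨heC, heW⟩
      have heC' : e ∉ C' := fun hh => heW (Finset.mem_union_left _ hh)
      have heCC : e ∈ C := by
        rcases Finset.mem_union.mp heC with h' | h'
        · exact h'
        · exact absurd h' heC'
      -- the outside candidate e has weight ≤ x
      have houtle : apprWeight V A w e ≤ x := by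
        by_cases him : e ∈ Finset.univ.image c
        · rcases Finset.mem_image.mp him with ⟨i, _, rfl⟩
          have hige : k - ℓ ≤ (i : ℕ) := by
            by_contra hcon
            push_neg at hcon
            apply heW
            refine Finset.mem_union_right _ (Finset.mem_image.mpr ⟨(i : ℕ),
              Finset.mem_range.mpr hcon, ?_⟩)
            congr 1
            apply Fin.ext
            simp only [Fin.val_mk]
            omega
          rw [hx]
          exact hcmono _ _ (by simp [Fin.le_def]; omega)
        · rw [hx]
          exact hcAV.2.2 _ (Finset.mem_image.mpr ⟨_, Finset.mem_univ _, rfl⟩)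
            _ (Finset.mem_sdiff.mpr ⟨heCC, him⟩)
      have houtext : apprWeight (V ∪ V') Ae we e = apprWeight V A w e := hold _ heC'
      -- the inside candidate d has weight ≥ x
      have hinge : x ≤ apprWeight (V ∪ V') Ae we d := by
        rcases Finset.mem_union.mp hd with h' | h'
        · rw [hnew _ h']
          exact h _ h'
        · rcases Finset.mem_image.mp h' with ⟨j, hj, rfl⟩
          simp only [Finset.mem_range] at hj
          rw [hold _ (Finset.disjoint_left.mp hCC' (hcmem _)), hx]
          exact hcmono _ _ (by simp [Fin.le_def]; omega)
      calc apprWeight (V ∪ V') Ae we e = apprWeight V A w e := houtext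
        _ ≤ x := houtle
        _ ≤ apprWeight (V ∪ V') Ae we d := hinge
end

section
/- Let A be a real m×n matrix, b ∈ ℝ^m, and c ∈ ℝ^n, and suppose the linear program: minimize c·y subject to A·y ≥ b and y ≥ 0 (componentwise) is feasible and attains its minimum. Then the minimum is attained at some feasible point y* having at most m nonzero coordinates. -/
/-!
Among the optimal points choose one, `y`, of smallest support. If `y` had more than `m`
nonzero coordinates, the columns of `A` on its support would be dependent, giving `d ≠ 0` with
`A d = 0` supported inside the support of `y`. Then `y ± t d` is feasible for small `t > 0`, so
optimality forces `c ⬝ᵥ d = 0`; moving from `y` along `±d` until a coordinate hits zero (the ratio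
test) keeps feasibility and cost and shrinks the support, a contradiction.
-/

open Finset Function Matrix

variable {𝕜 ι κ : Type*} [Fintype ι]

theorem Matrix.exists_ne_zero_mulVec_eq_zero_support_subset [Fintype κ] [Field 𝕜]
    (A : Matrix κ ι 𝕜) (s : Finset ι) (hs : Fintype.card κ < #s) :
    ∃ d ≠ 0, A *ᵥ d = 0 ∧ support d ⊆ s := by
  have hdep : ¬LinearIndepOn 𝕜 Aᵀ (s : Set ι) := fun hli => by
    have := hli.linearIndependent.fintype_card_le_finrank
    simp only [coe_sort_coe, Fintype.card_coe, Module.finrank_fintype_fun_eq_card] at this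
    omega
  obtain ⟨f, hf, j, hj, hfj⟩ := not_linearIndepOn_finset_iff.1 hdep
  refine ⟨(s : Set ι).indicator f, fun h => hfj ?_, ?_, Set.support_indicator_subset⟩
  · simpa [hj] using congrFun h j
  · rw [mulVec_eq_sum, ← hf, ← sum_indicator_subset _ (subset_univ s)]
    simp only [op_smul_eq_smul]
    exact sum_congr rfl fun j _ => (Set.indicator_smul_apply_left _ _ _ _).symm

section Feasibility

variable [CommSemiring 𝕜] [Preorder 𝕜]

def IsFeasible (A : Matrix κ ι 𝕜) (b : κ → 𝕜) (y : ι → 𝕜) : Prop :=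
  b ≤ A *ᵥ y ∧ 0 ≤ y

def IsOptimal (A : Matrix κ ι 𝕜) (b : κ → 𝕜) (c y : ι → 𝕜) : Prop :=
  IsFeasible A b y ∧ ∀ z, IsFeasible A b z → c ⬝ᵥ y ≤ c ⬝ᵥ z

theorem IsFeasible.add_smul {A : Matrix κ ι 𝕜} {b : κ → 𝕜} {y d : ι → 𝕜}
    (hy : IsFeasible A b y) (hd : A *ᵥ d = 0) {t : 𝕜} (hnonneg : 0 ≤ y + t • d) :
    IsFeasible A b (y + t • d) :=
  ⟨by simpa [mulVec_add, mulVec_smul, hd] using hy.1, hnonneg⟩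

end Feasibility

section OrderedField

variable [Field 𝕜] [LinearOrder 𝕜] [IsStrictOrderedRing 𝕜]

theorem exists_pos_add_smul_nonneg_support_ssubset {y d : ι → 𝕜} (hy : 0 ≤ y)
    (hd : support d ⊆ support y) (hneg : ∃ j, d j < 0) :
    ∃ t : 𝕜, 0 < t ∧ 0 ≤ y + t • d ∧ support (y + t • d) ⊂ support y := by
  classical
  obtain ⟨k, hk, hmin⟩ := exists_min_image {j | d j < 0} (fun j => y j / -d j)
    (by simpa [Finset.Nonempty] using hneg)
  have hdk : d k < 0 := by simpa using hk
  have hyk : 0 < y k := (hy k).lt_of_ne' (hd hdk.ne)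
  refine ⟨y k / -d k, div_pos hyk (neg_pos.2 hdk), fun j => ?_, ?_⟩
  · rcases lt_or_ge (d j) 0 with hdj | hdj
    · have := hmin j (by simpa using hdj)
      rw [le_div_iff₀ (neg_pos.2 hdj)] at this
      simp only [Pi.zero_apply, Pi.add_apply, Pi.smul_apply, smul_eq_mul]
      linarith
    · exact add_nonneg (hy j) (mul_nonneg (div_pos hyk (neg_pos.2 hdk)).le hdj)
  · have hsub : support (y + (y k / -d k) • d) ⊆ support y :=
      (support_add _ _).trans <|
        Set.union_subset subset_rfl ((support_smul_subset_right _ _).trans hd)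
    refine (Set.ssubset_iff_of_subset hsub).2 ⟨k, hyk.ne', ?_⟩
    simp [div_neg, div_mul_cancel₀ _ hdk.ne]

theorem exists_pos_add_smul_nonneg {y d : ι → 𝕜} (hy : 0 ≤ y) (hd : support d ⊆ support y) :
    ∃ t : 𝕜, 0 < t ∧ 0 ≤ y + t • d := by
  by_cases hneg : ∃ j, d j < 0
  · obtain ⟨t, ht, hnonneg, -⟩ := exists_pos_add_smul_nonneg_support_ssubset hy hd hneg
    exact ⟨t, ht, hnonneg⟩
  · simp only [not_exists, not_lt] at hneg
    exact ⟨1, one_pos, fun j => by simpa using add_nonneg (hy j) (hneg j)⟩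

variable {A : Matrix κ ι 𝕜} {b : κ → 𝕜} {c y d : ι → 𝕜}

theorem IsOptimal.dotProduct_eq_zero (hy : IsOptimal A b c y) (hd : A *ᵥ d = 0)
    (hsupp : support d ⊆ support y) : c ⬝ᵥ d = 0 := by
  have step (e : ι → 𝕜) (he : A *ᵥ e = 0) (hsupp : support e ⊆ support y) : 0 ≤ c ⬝ᵥ e := by
    obtain ⟨t, ht, hnonneg⟩ := exists_pos_add_smul_nonneg hy.1.2 hsupp
    have := hy.2 _ (hy.1.add_smul he hnonneg)
    rw [dotProduct_add, dotProduct_smul, smul_eq_mul, le_add_iff_nonneg_right] at this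
    exact nonneg_of_mul_nonneg_right this ht
  have hneg := step (-d) (by simp [mulVec_neg, hd]) (by simpa using hsupp)
  rw [dotProduct_neg, neg_nonneg] at hneg
  exact le_antisymm hneg (step d hd hsupp)

theorem IsOptimal.exists_support_ssubset [Fintype κ] (hy : IsOptimal A b c y)
    (hcard : Fintype.card κ < #{j | y j ≠ 0}) :
    ∃ y', IsOptimal A b c y' ∧ support y' ⊂ support y := by
  obtain ⟨d, hd0, hAd, hsupp⟩ := A.exists_ne_zero_mulVec_eq_zero_support_subset _ hcard
  rw [coe_filter_univ] at hsupp
  have hcd := hy.dotProduct_eq_zero hAd hsupp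
  obtain ⟨e, hAe, hce, hesupp, hneg⟩ : ∃ e, A *ᵥ e = 0 ∧ c ⬝ᵥ e = 0 ∧ support e ⊆ support y ∧
      ∃ j, e j < 0 := by
    obtain ⟨j, hj⟩ := Function.ne_iff.1 hd0
    rcases hj.lt_or_gt with hlt | hgt
    · exact ⟨d, hAd, hcd, hsupp, j, hlt⟩
    · exact ⟨-d, by simp [mulVec_neg, hAd], by simp [hcd], by simpa using hsupp, j,
        by simpa using hgt⟩
  obtain ⟨t, -, hnonneg, hssub⟩ :=
    exists_pos_add_smul_nonneg_support_ssubset hy.1.2 hesupp hneg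
  refine ⟨y + t • e, ⟨hy.1.add_smul hAe hnonneg, fun z hz => ?_⟩, hssub⟩
  simpa [dotProduct_add, dotProduct_smul, hce] using hy.2 z hz

theorem IsOptimal.exists_card_support_le [Fintype κ] (hy : IsOptimal A b c y) :
    ∃ y', IsOptimal A b c y' ∧ #{j | y' j ≠ 0} ≤ Fintype.card κ := by
  induction hk : #{j | y j ≠ 0} using Nat.strong_induction_on generalizing y with
  | _ k ih =>
    by_cases hle : k ≤ Fintype.card κ
    · exact ⟨y, hy, hk ▸ hle⟩
    obtain ⟨y', hy', hssub⟩ := hy.exists_support_ssubset (by omega)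
    refine ih _ ?_ hy' rfl
    rw [← hk]
    exact card_lt_card (by rwa [← coe_ssubset, coe_filter_univ, coe_filter_univ])

end OrderedField

/-- Let `A` be a real `m × n` matrix, `b ∈ ℝ^m`, `c ∈ ℝ^n`, and suppose the linear program
`min c·y` subject to `A·y ≥ b` and `y ≥ 0` is feasible and attains its minimum (witnessed by
the optimal feasible point `y₀`). Then the minimum is attained at some feasible point `ystar`
having at most `m` nonzero coordinates. -/
theorem lp_optimum_attained_with_few_nonzeros
    (m n : ℕ) (A : Matrix (Fin m) (Fin n) ℝ) (b : Fin m → ℝ) (c : Fin n → ℝ)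
    (y₀ : Fin n → ℝ)
    (hy₀feas : (∀ i, b i ≤ A.mulVec y₀ i) ∧ (∀ j, 0 ≤ y₀ j))
    (hy₀opt : ∀ y : Fin n → ℝ, (∀ i, b i ≤ A.mulVec y i) → (∀ j, 0 ≤ y j) →
      ∑ j, c j * y₀ j ≤ ∑ j, c j * y j) :
    ∃ ystar : Fin n → ℝ,
      (∀ i, b i ≤ A.mulVec ystar i) ∧ (∀ j, 0 ≤ ystar j) ∧
      (∀ y : Fin n → ℝ, (∀ i, b i ≤ A.mulVec y i) → (∀ j, 0 ≤ y j) →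
        ∑ j, c j * ystar j ≤ ∑ j, c j * y j) ∧
      (Finset.univ.filter fun j => ystar j ≠ 0).card ≤ m := by
  have hy₀ : IsOptimal A b c y₀ := ⟨hy₀feas, fun z hz => hy₀opt z hz.1 hz.2⟩
  obtain ⟨y, ⟨⟨hAy, hy⟩, hopt⟩, hcard⟩ := hy₀.exists_card_support_le
  exact ⟨y, hAy, hy, fun z hAz hz => hopt z ⟨hAz, hz⟩, by simpa using hcard⟩
end
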